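/- The operator L⁻¹ on C([0,1]) given by (L⁻¹η)(R) = η(R) − (2/R⁵)∫₀^R τ⁴η(τ)dτ has operator norm exactly 7/5. -/
import Mathlib


open Set

/-- The operator `L⁻¹` on `C([0,1])`: `(L⁻¹η)(R) = η(R) − (2/R⁵)∫₀^R τ⁴η(τ)dτ`,
with value `(3/5)η(0)` at `R = 0` (the continuous extension). -/
noncomputable def Linv (η : ℝ → ℝ) (R : ℝ) : ℝ :=
  if R = 0 then (3/5) * η 0
  else η R - (2 / R ^ 5) * ∫ τ in (0:ℝ)..R, τ ^ 4 * η τ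

/-- The operator norm of `L⁻¹` on `C([0,1])` (with the sup norm) is exactly `7/5`:
it is bounded by `7/5` on the unit ball, and this bound is sharp. -/
theorem stmt_1 :
    (∀ η : ℝ → ℝ, ContinuousOn η (Icc 0 1) → (∀ R ∈ Icc (0:ℝ) 1, |η R| ≤ 1) →
      ∀ R ∈ Icc (0:ℝ) 1, |Linv η R| ≤ 7/5) ∧
    (∀ ε > (0:ℝ), ∃ η : ℝ → ℝ, ContinuousOn η (Icc 0 1) ∧
      (∀ R ∈ Icc (0:ℝ) 1, |η R| ≤ 1) ∧ ∃ R ∈ Icc (0:ℝ) 1, 7/5 - ε < |Linv η R|) := by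
  constructor
  · intro η hc hb R hR
    obtain ⟨hR0, hR1⟩ := hR
    unfold Linv
    by_cases h : R = 0
    · rw [if_pos h, abs_mul]
      have h0 := hb 0 ⟨le_refl 0, by norm_num⟩
      rw [abs_of_nonneg (by norm_num : (0:ℝ) ≤ 3/5)]
      nlinarith
    · rw [if_neg h]
      have hRpos : 0 < R := lt_of_le_of_ne hR0 (Ne.symm h)
      have hcont : ContinuousOn (fun τ : ℝ => τ ^ 4 * η τ) (Icc 0 R) :=
        (continuousOn_pow 4).mul (hc.mono (Icc_subset_Icc le_rfl hR1))
      have hint : IntervalIntegrable (fun τ : ℝ => τ ^ 4 * η τ) MeasureTheory.volume 0 R :=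
        ContinuousOn.intervalIntegrable (by rwa [uIcc_of_le hR0])
      have habs : |∫ τ in (0:ℝ)..R, τ ^ 4 * η τ| ≤ R ^ 5 / 5 := by
        calc |∫ τ in (0:ℝ)..R, τ ^ 4 * η τ| ≤ ∫ τ in (0:ℝ)..R, |τ ^ 4 * η τ| :=
              intervalIntegral.abs_integral_le_integral_abs hR0
          _ ≤ ∫ τ in (0:ℝ)..R, τ ^ 4 := by
              apply intervalIntegral.integral_mono_on hR0 hint.abs
                (intervalIntegral.intervalIntegrable_pow 4)
              intro τ hτ
              rw [abs_mul, abs_pow, abs_of_nonneg hτ.1]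
              have hbτ := hb τ ⟨hτ.1, hτ.2.trans hR1⟩
              nlinarith [pow_nonneg hτ.1 4, abs_nonneg (η τ)]
          _ = R ^ 5 / 5 := by rw [integral_pow]; norm_num
      have hη := hb R ⟨hR0, hR1⟩
      have h5 : 0 < R ^ 5 := pow_pos hRpos 5
      have h2 : |2 / R ^ 5 * ∫ τ in (0:ℝ)..R, τ ^ 4 * η τ| ≤ 2/5 := by
        rw [abs_mul, abs_of_nonneg (by positivity : (0:ℝ) ≤ 2 / R ^ 5)]
        rw [div_mul_eq_mul_div, div_le_iff₀ h5]
        nlinarith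
      calc |η R - 2 / R ^ 5 * ∫ τ in (0:ℝ)..R, τ ^ 4 * η τ|
          ≤ |η R| + |2 / R ^ 5 * ∫ τ in (0:ℝ)..R, τ ^ 4 * η τ| := abs_sub _ _
        _ ≤ 1 + 2/5 := add_le_add hη h2
        _ = 7/5 := by norm_num
  · intro ε hε
    obtain ⟨n, hn⟩ : ∃ n : ℕ, 4/ε < n := exists_nat_gt _
    refine ⟨fun R => -1 + 2 * R ^ n, (by fun_prop : Continuous fun R : ℝ => -1 + 2 * R ^ n).continuousOn, ?_, 1, ⟨by norm_num, le_refl 1⟩, ?_⟩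
    · intro R hR
      have h0 : 0 ≤ R ^ n := pow_nonneg hR.1 n
      have h1 : R ^ n ≤ 1 := pow_le_one₀ hR.1 hR.2
      rw [abs_le]
      dsimp only
      constructor <;> nlinarith
    · have hn5 : (0:ℝ) < (n:ℝ) + 5 := by positivity
      have key : (∫ τ in (0:ℝ)..1, τ ^ 4 * (-1 + 2 * τ ^ n)) = -(1/5) + 2 * (1 / ((n:ℝ) + 5)) := by
        have heq : ∀ τ : ℝ, τ ^ 4 * (-1 + 2 * τ ^ n) = -(τ ^ 4) + 2 * τ ^ (n + 4) := by
          intro τ; ring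
        simp_rw [heq]
        have h1 : IntervalIntegrable (fun τ : ℝ => -(τ ^ 4)) MeasureTheory.volume 0 1 :=
          (intervalIntegral.intervalIntegrable_pow 4).neg
        have h2 : IntervalIntegrable (fun τ : ℝ => 2 * τ ^ (n + 4)) MeasureTheory.volume 0 1 :=
          (intervalIntegral.intervalIntegrable_pow (n + 4)).const_mul 2
        have hadd : (∫ τ in (0:ℝ)..1, (-(τ ^ 4) + 2 * τ ^ (n + 4)))
            = (∫ τ in (0:ℝ)..1, -(τ ^ 4)) + ∫ τ in (0:ℝ)..1, 2 * τ ^ (n + 4) :=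
          intervalIntegral.integral_add h1 h2
        rw [show (∫ τ in (0:ℝ)..1, (-τ ^ 4 + 2 * τ ^ (n + 4)))
            = ∫ τ in (0:ℝ)..1, (-(τ ^ 4) + 2 * τ ^ (n + 4)) by norm_num, hadd,
          intervalIntegral.integral_neg, intervalIntegral.integral_const_mul,
          integral_pow, integral_pow]
        push_cast
        rw [one_pow, one_pow]
        ring_nf
      unfold Linv
      rw [if_neg one_ne_zero, key]
      have h4 : 4 / ((n:ℝ) + 5) < ε := by
        rw [div_lt_iff₀ hn5]
        have : 4 / ε < (n:ℝ) + 5 := by linarith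
        rw [div_lt_iff₀ hε] at this
        linarith
      have hval : (-1 + 2 * (1:ℝ) ^ n) - 2 / 1 ^ 5 * (-(1/5) + 2 * (1 / ((n:ℝ) + 5)))
          = 7/5 - 4 / ((n:ℝ) + 5) := by
        rw [one_pow, one_pow]
        field_simp
        ring
      rw [hval]
      have hle : 4 / ((n:ℝ) + 5) ≤ 4/5 := by
        rw [div_le_div_iff₀ hn5 (by norm_num : (0:ℝ) < 5)]
        have : (0:ℝ) ≤ (n:ℝ) := Nat.cast_nonneg n
        linarith
      have : 0 < 4 / ((n:ℝ) + 5) := by positivity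
      rw [abs_of_pos (by linarith)]
      linarith
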